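/- For N = 2, the C_2 operator M_{2,k} = Σ_{ε_1,ε_2=±1} [x_1^{2ε_1}/(x_1^{2ε_1}−1)][x_2^{2ε_2}/(x_2^{2ε_2}−1)][x_1^{ε_1}x_2^{ε_2}/(x_1^{ε_1}x_2^{ε_2}−1)] x_1^{kε_1}x_2^{kε_2} Γ_1^{ε_1}Γ_2^{ε_2} satisfies M_{2,0} · 1 = 1 and, applied to the constant function, M_{2,1}·1 = s_{1,1}^{(C_2)}(x_1,x_2), where s_{1,1}^{(C_2)} is the symplectic Schur function det(x_i^{2−j+λ_j+1} − x_i^{−(2−j+λ_j+1)})/det(x_i^{2−j+1} − x_i^{−(2−j+1)}) with λ=(1,1). -/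

import Mathlib

noncomputable section

open MvPolynomial

/-- The base field `ℚ(q^{1/2})`; `sQ` is the square root of `q`. -/
abbrev Rq : Type := RatFunc ℚ

/-- `q^{1/2}`. -/
def sQ : Rq := RatFunc.X

lemma sq_ne_zero : sQ ≠ 0 := RatFunc.X_ne_zero

/-- The parameter `q`. -/
def qq : Rq := sQ ^ 2

/-- Polynomials in the variables `y_i = x_i^{1/2}`, `i = 1, …, N`. -/
abbrev Pol (N : ℕ) := MvPolynomial (Fin N) Rq

/-- The field of rational functions in `x_1^{1/2}, …, x_N^{1/2}` over `ℚ(q^{1/2})`. -/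
abbrev K (N : ℕ) := FractionRing (Pol N)

/-- The substitution `y_j ↦ q^{v_j/2} y_j` on polynomials. -/
def shiftHom (N : ℕ) (v : Fin N → ℤ) : Pol N →ₐ[Rq] Pol N :=
  aeval fun j => C (sQ ^ v j) * X j

/-- The substitution `y_j ↦ q^{v_j/2} y_j` as an algebra automorphism of polynomials. -/
def shiftEquiv (N : ℕ) (v : Fin N → ℤ) : Pol N ≃ₐ[Rq] Pol N :=
  AlgEquiv.ofAlgHom (shiftHom N v) (shiftHom N (-v))
    (by
      apply MvPolynomial.algHom_ext
      intro j
      simp [shiftHom]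
      rw [← mul_assoc, ← C_mul, inv_mul_cancel₀ (zpow_ne_zero _ sq_ne_zero), C_1, one_mul])
    (by
      apply MvPolynomial.algHom_ext
      intro j
      simp [shiftHom]
      rw [← mul_assoc, ← C_mul, mul_inv_cancel₀ (zpow_ne_zero _ sq_ne_zero), C_1, one_mul])

/-- The `q`-shift operator `∏_i Γ_i^{v_i/2}` : the field automorphism of `K N` induced by the
substitution `y_j = x_j^{1/2} ↦ q^{v_j / 2} y_j`, i.e. `x_j ↦ q^{v_j} x_j`.  In particular
`Γ N (2 • v)` is the honest shift `x_j ↦ q^{v_j} x_j` and half-units allow `Γ_j^{1/2}`. -/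
def Γ (N : ℕ) (v : Fin N → ℤ) : K N ≃+* K N :=
  IsFractionRing.ringEquivOfRingEquiv (shiftEquiv N v).toRingEquiv

/-- The square root `y_i = x_i^{1/2}` of the `i`-th variable, inside `K N`. -/
def y (N : ℕ) (i : Fin N) : K N := algebraMap (Pol N) (K N) (X i)

/-- The `i`-th variable `x_i` of `K N`. -/
def x (N : ℕ) (i : Fin N) : K N := y N i ^ 2

/-- The parameter `q` inside `K N`. -/
def qK (N : ℕ) : K N := algebraMap (Pol N) (K N) (C qq)

end

noncomputable section

/-- The `C_2` difference operator
`M_{2,k} = Σ_{ε_1,ε_2=±1} x_1^{2ε_1}/(x_1^{2ε_1}−1) · x_2^{2ε_2}/(x_2^{2ε_2}−1) ·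
x_1^{ε_1}x_2^{ε_2}/(x_1^{ε_1}x_2^{ε_2}−1) · x_1^{kε_1}x_2^{kε_2} Γ_1^{ε_1}Γ_2^{ε_2}`. -/
def M2C (k : ℤ) : K 2 → K 2 := fun f =>
  ∑ e1 ∈ ({1, -1} : Finset ℤ), ∑ e2 ∈ ({1, -1} : Finset ℤ),
    (x 2 0 ^ (2 * e1) / (x 2 0 ^ (2 * e1) - 1)) *
      (x 2 1 ^ (2 * e2) / (x 2 1 ^ (2 * e2) - 1)) *
      (x 2 0 ^ e1 * x 2 1 ^ e2 / (x 2 0 ^ e1 * x 2 1 ^ e2 - 1)) *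
      (x 2 0 ^ (k * e1) * x 2 1 ^ (k * e2)) * Γ 2 ![2 * e1, 2 * e2] f

/-- `x_i^m − x_i^{−m}`. -/
def AC (i : Fin 2) (m : ℤ) : K 2 := x 2 i ^ m - x 2 i ^ (-m)

/-- The symplectic (`C_2`) Schur function
`s_{1,1} = det(x_i^{2−j+λ_j+1} − x_i^{−(2−j+λ_j+1)}) / det(x_i^{2−j+1} − x_i^{−(2−j+1)})` for
`λ = (1,1)`. -/
def sC11 : K 2 :=
  (AC 0 3 * AC 1 2 - AC 0 2 * AC 1 3) / (AC 0 2 * AC 1 1 - AC 0 1 * AC 1 2)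

section KeyLemmas
variable {F : Type*} [Field F] (a b : F)

private lemma fracAux18 (u n w : F) (hn : n - w ≠ 0) (h : u * w = n) :
    u / (u - 1) = n / (n - w) := by
  have hu1 : u - 1 ≠ 0 := by
    intro h'
    have hu : u = 1 := by linear_combination h'
    rw [hu, one_mul] at h
    exact hn (by rw [h]; ring)
  rw [div_eq_div_iff hu1 hn]
  linear_combination -h

private lemma key0_18 (ha : a ≠ 0) (hb : b ≠ 0)
    (h1 : a^2 - 1 ≠ 0) (h2 : b^2 - 1 ≠ 0) (h3 : a*b - 1 ≠ 0) (h4 : a - b ≠ 0) :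
    (a^2/(a^2-1)) * (b^2/(b^2-1)) * (a*b/(a*b-1)) +
    (a^2/(a^2-1)) * ((b^2)⁻¹/((b^2)⁻¹-1)) * (a*b⁻¹/(a*b⁻¹-1)) +
    (((a^2)⁻¹/((a^2)⁻¹-1)) * (b^2/(b^2-1)) * (a⁻¹*b/(a⁻¹*b-1)) +
    ((a^2)⁻¹/((a^2)⁻¹-1)) * ((b^2)⁻¹/((b^2)⁻¹-1)) * (a⁻¹*b⁻¹/(a⁻¹*b⁻¹-1))) = 1 := by
  have h1' : (1:F) - a^2 ≠ 0 := fun h => h1 (by linear_combination -h)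
  have h2' : (1:F) - b^2 ≠ 0 := fun h => h2 (by linear_combination -h)
  have h3' : (1:F) - a*b ≠ 0 := fun h => h3 (by linear_combination -h)
  have h4' : b - a ≠ 0 := fun h => h4 (by linear_combination -h)
  rw [fracAux18 ((a^2)⁻¹) 1 (a^2) h1' (inv_mul_cancel₀ (pow_ne_zero 2 ha)),
      fracAux18 ((b^2)⁻¹) 1 (b^2) h2' (inv_mul_cancel₀ (pow_ne_zero 2 hb)),
      fracAux18 (a*b⁻¹) a b h4 (by field_simp),
      fracAux18 (a⁻¹*b) b a h4' (by field_simp),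
      fracAux18 (a⁻¹*b⁻¹) 1 (a*b) h3' (by field_simp)]
  set D : F := (a^2-1)*(b^2-1)*(a*b-1)*(a-b) with hDdef
  have hD : D ≠ 0 := mul_ne_zero (mul_ne_zero (mul_ne_zero h1 h2) h3) h4
  have e1 : a^2/(a^2-1) * (b^2/(b^2-1)) * (a*b/(a*b-1)) = (a^3*b^3*(a-b))/D := by
    rw [div_mul_div_comm, div_mul_div_comm,
      div_eq_div_iff (mul_ne_zero (mul_ne_zero h1 h2) h3) hD, hDdef]
    ring
  have e2 : a^2/(a^2-1) * (1/(1-b^2)) * (a/(a-b)) = (-(a^3*(a*b-1)))/D := by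
    rw [div_mul_div_comm, div_mul_div_comm,
      div_eq_div_iff (mul_ne_zero (mul_ne_zero h1 h2') h4) hD, hDdef]
    ring
  have e3 : 1/(1-a^2) * (b^2/(b^2-1)) * (b/(b-a)) = (b^3*(a*b-1))/D := by
    rw [div_mul_div_comm, div_mul_div_comm,
      div_eq_div_iff (mul_ne_zero (mul_ne_zero h1' h2) h4') hD, hDdef]
    ring
  have e4 : 1/(1-a^2) * (1/(1-b^2)) * (1/(1-a*b)) = (-(a-b))/D := by
    rw [div_mul_div_comm, div_mul_div_comm,
      div_eq_div_iff (mul_ne_zero (mul_ne_zero h1' h2') h3') hD, hDdef]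
    ring
  rw [e1, e2, e3, e4, ← add_div, ← add_div, ← add_div,
    div_eq_one_iff_eq hD, hDdef]
  ring

private lemma key1_18 (ha : a ≠ 0) (hb : b ≠ 0)
    (h1 : a^2 - 1 ≠ 0) (h2 : b^2 - 1 ≠ 0) (h3 : a*b - 1 ≠ 0) (h4 : a - b ≠ 0) :
    (a^2/(a^2-1)) * (b^2/(b^2-1)) * (a*b/(a*b-1)) * (a*b) +
    (a^2/(a^2-1)) * ((b^2)⁻¹/((b^2)⁻¹-1)) * (a*b⁻¹/(a*b⁻¹-1)) * (a*b⁻¹) +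
    (((a^2)⁻¹/((a^2)⁻¹-1)) * (b^2/(b^2-1)) * (a⁻¹*b/(a⁻¹*b-1)) * (a⁻¹*b) +
    ((a^2)⁻¹/((a^2)⁻¹-1)) * ((b^2)⁻¹/((b^2)⁻¹-1)) * (a⁻¹*b⁻¹/(a⁻¹*b⁻¹-1)) * (a⁻¹*b⁻¹))
    = ((a^3 - (a^3)⁻¹) * (b^2 - (b^2)⁻¹) - (a^2 - (a^2)⁻¹) * (b^3 - (b^3)⁻¹)) /
      ((a^2 - (a^2)⁻¹) * (b - b⁻¹) - (a - a⁻¹) * (b^2 - (b^2)⁻¹)) := by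
  have h1' : (1:F) - a^2 ≠ 0 := fun h => h1 (by linear_combination -h)
  have h2' : (1:F) - b^2 ≠ 0 := fun h => h2 (by linear_combination -h)
  have h3' : (1:F) - a*b ≠ 0 := fun h => h3 (by linear_combination -h)
  have h4' : b - a ≠ 0 := fun h => h4 (by linear_combination -h)
  have schur : ((a^3 - (a^3)⁻¹) * (b^2 - (b^2)⁻¹) - (a^2 - (a^2)⁻¹) * (b^3 - (b^3)⁻¹)) /
      ((a^2 - (a^2)⁻¹) * (b - b⁻¹) - (a - a⁻¹) * (b^2 - (b^2)⁻¹))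
      = (a^2*b^2 + a^2 + b^2 + 1 + a*b) / (a*b) := by
    have hDen : (a^2 - (a^2)⁻¹) * (b - b⁻¹) - (a - a⁻¹) * (b^2 - (b^2)⁻¹)
        = ((a^2-1)*(b^2-1)*(a-b)*(a*b-1)) / (a^2*b^2) := by
      field_simp
      ring
    have hY : (a^2 - (a^2)⁻¹) * (b - b⁻¹) - (a - a⁻¹) * (b^2 - (b^2)⁻¹) ≠ 0 := by
      rw [hDen]
      exact div_ne_zero (mul_ne_zero (mul_ne_zero (mul_ne_zero h1 h2) h4) h3)
        (mul_ne_zero (pow_ne_zero 2 ha) (pow_ne_zero 2 hb))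
    rw [div_eq_div_iff hY (mul_ne_zero ha hb)]
    field_simp
    ring
  rw [schur]
  rw [fracAux18 ((a^2)⁻¹) 1 (a^2) h1' (inv_mul_cancel₀ (pow_ne_zero 2 ha)),
      fracAux18 ((b^2)⁻¹) 1 (b^2) h2' (inv_mul_cancel₀ (pow_ne_zero 2 hb)),
      fracAux18 (a*b⁻¹) a b h4 (by field_simp),
      fracAux18 (a⁻¹*b) b a h4' (by field_simp),
      fracAux18 (a⁻¹*b⁻¹) 1 (a*b) h3' (by field_simp)]
  set D : F := (a^2-1)*(b^2-1)*(a*b-1)*(a-b)*(a*b) with hDdef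
  have hD : D ≠ 0 :=
    mul_ne_zero (mul_ne_zero (mul_ne_zero (mul_ne_zero h1 h2) h3) h4) (mul_ne_zero ha hb)
  have e1 : a^2/(a^2-1) * (b^2/(b^2-1)) * (a*b/(a*b-1)) * (a*b) = (a^5*b^5*(a-b))/D := by
    rw [div_mul_div_comm, div_mul_div_comm, div_mul_eq_mul_div,
      div_eq_div_iff (mul_ne_zero (mul_ne_zero h1 h2) h3) hD, hDdef]
    ring
  have e2 : a^2/(a^2-1) * (1/(1-b^2)) * (a/(a-b)) * (a*b⁻¹) = (-(a^5*(a*b-1)))/D := by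
    rw [← div_eq_mul_inv, div_mul_div_comm, div_mul_div_comm, div_mul_div_comm,
      div_eq_div_iff (mul_ne_zero (mul_ne_zero (mul_ne_zero h1 h2') h4) hb) hD, hDdef]
    ring
  have e3 : 1/(1-a^2) * (b^2/(b^2-1)) * (b/(b-a)) * (a⁻¹*b) = (b^5*(a*b-1))/D := by
    rw [show a⁻¹*b = b/a by rw [mul_comm, div_eq_mul_inv], div_mul_div_comm,
      div_mul_div_comm, div_mul_div_comm,
      div_eq_div_iff (mul_ne_zero (mul_ne_zero (mul_ne_zero h1' h2) h4') ha) hD, hDdef]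
    ring
  have e4 : 1/(1-a^2) * (1/(1-b^2)) * (1/(1-a*b)) * (a⁻¹*b⁻¹) = (-(a-b))/D := by
    rw [show a⁻¹*b⁻¹ = 1/(a*b) by rw [one_div, mul_inv, mul_comm], div_mul_div_comm,
      div_mul_div_comm, div_mul_div_comm,
      div_eq_div_iff (mul_ne_zero (mul_ne_zero (mul_ne_zero h1' h2') h3')
        (mul_ne_zero ha hb)) hD, hDdef]
    ring
  rw [e1, e2, e3, e4, ← add_div, ← add_div, ← add_div,
    div_eq_div_iff hD (mul_ne_zero ha hb), hDdef]
  ring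

end KeyLemmas

open MvPolynomial in
private lemma ne_zero_of_aeval18 {p : Pol 2} (h : aeval (![2, 3] : Fin 2 → Rq) p ≠ 0) :
    p ≠ 0 := fun hp => h (by rw [hp, map_zero])

private instance : CharZero Rq :=
  (RingHom.charZero_iff (RatFunc.C : ℚ →+* RatFunc ℚ).injective).mp inferInstance

private lemma algMap_ne18 {p : Pol 2} (hp : p ≠ 0) : algebraMap (Pol 2) (K 2) p ≠ 0 :=
  fun h => hp ((IsFractionRing.to_map_eq_zero_iff (K := K 2)).mp h)


set_option synthInstance.maxHeartbeats 400000 in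
set_option maxHeartbeats 1000000 in
open MvPolynomial in
/-- the `C_2` operator `M_{2,k}` applied to the constant function `1` gives
`M_{2,0}·1 = 1` (the eigenvalue equation for `λ = 0`) and `M_{2,1}·1 = s_{1,1}^{(C_2)}(x_1,x_2)`,
the symplectic Schur function. -/
theorem stmt18 : M2C 0 (1 : K 2) = 1 ∧ M2C 1 (1 : K 2) = sC11 := by
  have ha : x 2 0 ≠ 0 := pow_ne_zero 2 (algMap_ne18 (X_ne_zero 0))
  have hb : x 2 1 ≠ 0 := pow_ne_zero 2 (algMap_ne18 (X_ne_zero 1))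
  have h1 : x 2 0 ^ 2 - 1 ≠ 0 := by
    have : x 2 0 ^ 2 - 1 = algebraMap (Pol 2) (K 2) (X 0 ^ 4 - 1) := by
      rw [map_sub, map_pow, map_one]; unfold x y; ring
    rw [this]
    exact algMap_ne18 (ne_zero_of_aeval18 (by simp; norm_num))
  have h2 : x 2 1 ^ 2 - 1 ≠ 0 := by
    have : x 2 1 ^ 2 - 1 = algebraMap (Pol 2) (K 2) (X 1 ^ 4 - 1) := by
      rw [map_sub, map_pow, map_one]; unfold x y; ring
    rw [this]
    exact algMap_ne18 (ne_zero_of_aeval18 (by simp; norm_num))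
  have h3 : x 2 0 * x 2 1 - 1 ≠ 0 := by
    have : x 2 0 * x 2 1 - 1 = algebraMap (Pol 2) (K 2) (X 0 ^ 2 * X 1 ^ 2 - 1) := by
      rw [map_sub, map_mul, map_pow, map_pow, map_one]; unfold x y; ring
    rw [this]
    exact algMap_ne18 (ne_zero_of_aeval18 (by simp; norm_num))
  have h4 : x 2 0 - x 2 1 ≠ 0 := by
    have : x 2 0 - x 2 1 = algebraMap (Pol 2) (K 2) (X 0 ^ 2 - X 1 ^ 2) := by
      rw [map_sub, map_pow, map_pow]; unfold x y; ring
    rw [this]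
    exact algMap_ne18 (ne_zero_of_aeval18 (by simp; norm_num))
  constructor
  · unfold M2C
    rw [Finset.sum_pair (show (1:ℤ) ≠ -1 by decide),
        Finset.sum_pair (show (1:ℤ) ≠ -1 by decide),
        Finset.sum_pair (show (1:ℤ) ≠ -1 by decide)]
    simp only [map_one, mul_one, zpow_zero, zero_mul, mul_zero, zpow_neg, zpow_one]
    norm_num [zpow_ofNat]
    exact key0_18 _ _ ha hb h1 h2 h3 h4
  · unfold M2C sC11 AC
    rw [Finset.sum_pair (show (1:ℤ) ≠ -1 by decide),
        Finset.sum_pair (show (1:ℤ) ≠ -1 by decide),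
        Finset.sum_pair (show (1:ℤ) ≠ -1 by decide)]
    simp only [map_one, mul_one, one_mul, zpow_neg, zpow_one]
    norm_num [zpow_ofNat]
    exact key1_18 _ _ ha hb h1 h2 h3 h4
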